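/- Consider the replicator system dz_i/dτ = z_i (Θ₁(b_i - Σ_j b_j z_j) + Θ₂(-ν_i + Σ_j ν_j z_j)) on the simplex with Θ₁, Θ₂ > 0. If strain 1 satisfies Θ₁b_1 - Θ₂ν_1 > Θ₁b_j - Θ₂ν_j for all j ≠ 1, then V(z) = -ln z_1 is a Lyapunov function and every solution with z_1(0) > 0 converges to E_1 = (1,0,...,0). In particular, the winner is determined by the quantity Θ₁b_i - Θ₂ν_i, not by the basic reproduction numbers R_{0,i} alone. -/

import Mathlib

open Filter Finset Topology

/-! With fitness `fᵢ = Θ₁bᵢ - Θ₂νᵢ` the system is the replicator equation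
`zᵢ' = zᵢ (fᵢ - f̄(z))`, `f̄(z) = Σⱼ fⱼzⱼ`. On the simplex `f₀ - f̄(z) = Σⱼ zⱼ (f₀ - fⱼ) ≥ 0`,
which gives the Lyapunov property. Each coordinate solves a scalar linear equation, so
`zᵢ(t) = zᵢ(0) exp(fᵢ t - ∫₀ᵗ f̄)`; hence the simplex is invariant and
`zⱼ(t) z₀(0) = z₀(t) zⱼ(0) e^{(fⱼ - f₀) t} ≤ zⱼ(0) e^{(fⱼ - f₀) t} → 0` for `j ≠ 0`. -/

theorem eq_mul_exp_integral_of_hasDerivAt {y a : ℝ → ℝ} (ha : Continuous a)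
    (hy : ∀ t, HasDerivAt y (a t * y t) t) (t : ℝ) :
    y t = y 0 * Real.exp (∫ s in (0 : ℝ)..t, a s) := by
  set A : ℝ → ℝ := fun u => ∫ s in (0 : ℝ)..u, a s
  have hA : ∀ u, HasDerivAt A (a u) u := fun u =>
    intervalIntegral.integral_hasDerivAt_right (ha.intervalIntegrable 0 u)
      (ha.stronglyMeasurableAtFilter _ _) ha.continuousAt
  have hF : ∀ u, HasDerivAt (fun u => y u * Real.exp (-A u)) 0 u := fun u =>
    ((hy u).fun_mul (hA u).neg.exp).congr_deriv (by ring)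
  have hconst := is_const_of_deriv_eq_zero (fun u => (hF u).differentiableAt)
    (fun u => (hF u).deriv) t 0
  simp only [A, intervalIntegral.integral_same, neg_zero, Real.exp_zero, mul_one] at hconst
  rw [← hconst, mul_assoc, ← Real.exp_add, neg_add_cancel, Real.exp_zero, mul_one]

namespace Replicator

variable {ι : Type*} [Fintype ι]

def meanFitness (f w : ι → ℝ) : ℝ := ∑ j, f j * w j

@[simp]
theorem meanFitness_single [DecidableEq ι] (f : ι → ℝ) (i : ι) :
    meanFitness f (Pi.single i 1) = f i := by
  simp [meanFitness, Pi.single_apply]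

theorem sub_meanFitness_eq_sum {f w : ι → ℝ} (hw : ∑ j, w j = 1) (i : ι) :
    f i - meanFitness f w = ∑ j, w j * (f i - f j) := by
  have hfi : f i = ∑ j, w j * f i := by rw [← sum_mul, hw, one_mul]
  conv_lhs => rw [hfi, meanFitness, ← sum_sub_distrib]
  exact sum_congr rfl fun j _ => by ring

theorem meanFitness_le {f w : ι → ℝ} {i₀ : ι} (hf : ∀ j, f j ≤ f i₀)
    (hw₀ : ∀ j, 0 ≤ w j) (hw : ∑ j, w j = 1) : meanFitness f w ≤ f i₀ := by
  rw [← sub_nonneg, sub_meanFitness_eq_sum hw]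
  exact sum_nonneg fun j _ => mul_nonneg (hw₀ j) (sub_nonneg.2 (hf j))

theorem meanFitness_eq_iff [DecidableEq ι] {f w : ι → ℝ} {i₀ : ι}
    (hf : ∀ j ≠ i₀, f j < f i₀) (hw₀ : ∀ j, 0 ≤ w j) (hw : ∑ j, w j = 1) :
    meanFitness f w = f i₀ ↔ w = Pi.single i₀ 1 := by
  refine ⟨fun h => ?_, fun h => h ▸ meanFitness_single f i₀⟩
  have hterm : ∀ j, 0 ≤ w j * (f i₀ - f j) := fun j => by
    rcases eq_or_ne j i₀ with rfl | hj
    · simp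
    · exact mul_nonneg (hw₀ j) (sub_pos.2 (hf j hj)).le
  replace h : f i₀ - meanFitness f w = 0 := by rw [h, sub_self]
  rw [sub_meanFitness_eq_sum hw, sum_eq_zero_iff_of_nonneg fun j _ => hterm j] at h
  have hoff : ∀ j ≠ i₀, w j = 0 := fun j hj =>
    (mul_eq_zero.1 (h j (mem_univ j))).resolve_right (sub_pos.2 (hf j hj)).ne'
  have hon : w i₀ = 1 := by
    rw [← hw, sum_eq_single i₀ (fun j _ hj => hoff j hj) (by simp)]
  ext j
  rcases eq_or_ne j i₀ with rfl | hj
  · simp [hon]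
  · simp [hoff j hj, hj]

section Dynamics

variable {f : ι → ℝ} {z : ℝ → ι → ℝ}
  (hz : ∀ t i, HasDerivAt (fun s => z s i) (z t i * (f i - meanFitness f (z t))) t)
include hz

theorem continuous_meanFitness : Continuous fun t => meanFitness f (z t) :=
  continuous_finsetSum _ fun j _ =>
    continuous_const.mul (continuous_iff_continuousAt.2 fun t => (hz t j).continuousAt)

theorem eq_mul_exp (t : ℝ) (i : ι) :
    z t i = z 0 i * Real.exp (f i * t - ∫ s in (0 : ℝ)..t, meanFitness f (z s)) := by
  have hm := continuous_meanFitness hz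
  rw [eq_mul_exp_integral_of_hasDerivAt (y := fun s => z s i)
    (a := fun s => f i - meanFitness f (z s)) (continuous_const.sub hm)
    (fun t => by simpa only [mul_comm] using hz t i) t,
    intervalIntegral.integral_sub intervalIntegrable_const (hm.intervalIntegrable 0 t),
    intervalIntegral.integral_const, smul_eq_mul, sub_zero, mul_comm t]

theorem nonneg (h₀ : ∀ i, 0 ≤ z 0 i) (t : ℝ) (i : ι) : 0 ≤ z t i := by
  rw [eq_mul_exp hz]
  exact mul_nonneg (h₀ i) (Real.exp_pos _).le

theorem sum_eq_one (h₀ : ∑ i, z 0 i = 1) (t : ℝ) : ∑ i, z t i = 1 := by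
  have hS : ∀ t, HasDerivAt (fun s => ∑ i, z s i - 1)
      (-meanFitness f (z t) * (∑ i, z t i - 1)) t := fun t => by
    refine ((HasDerivAt.fun_sum fun i _ => hz t i).sub_const 1).congr_deriv ?_
    simp only [mul_sub, sum_sub_distrib, ← sum_mul]
    rw [meanFitness]
    simp only [mul_comm (z t _)]
    ring
  have := eq_mul_exp_integral_of_hasDerivAt (continuous_meanFitness hz).neg hS t
  rw [h₀, sub_self, zero_mul] at this
  linarith

theorem mul_eq_mul_exp (t : ℝ) (i j : ι) :
    z t j * z 0 i = z t i * z 0 j * Real.exp ((f j - f i) * t) := by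
  rw [eq_mul_exp hz t i, eq_mul_exp hz t j]
  have : f j * t - ∫ s in (0 : ℝ)..t, meanFitness f (z s) =
      (f i * t - ∫ s in (0 : ℝ)..t, meanFitness f (z s)) + (f j - f i) * t := by ring
  rw [this, Real.exp_add]
  ring

theorem tendsto_zero_of_lt (h₀ : ∀ i, 0 ≤ z 0 i) (hsum : ∑ i, z 0 i = 1) {i j : ι}
    (hi : 0 < z 0 i) (hfj : f j < f i) : Tendsto (fun t => z t j) atTop (𝓝 0) := by
  have hbound : ∀ t, z t j ≤ z 0 j / z 0 i * Real.exp ((f j - f i) * t) := fun t => by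
    have hle : z t i ≤ 1 :=
      sum_eq_one hz hsum t ▸ single_le_sum (fun k _ => nonneg hz h₀ t k) (mem_univ i)
    rw [div_mul_eq_mul_div, le_div_iff₀ hi, mul_eq_mul_exp hz, mul_assoc]
    exact mul_le_of_le_one_left (mul_nonneg (h₀ j) (Real.exp_pos _).le) hle
  have hexp : Tendsto (fun t => Real.exp ((f j - f i) * t)) atTop (𝓝 0) :=
    Real.tendsto_exp_atBot.comp <|
      tendsto_id.const_mul_atTop_of_neg (sub_neg.2 hfj)
  exact tendsto_of_tendsto_of_tendsto_of_le_of_le tendsto_const_nhds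
    (by simpa using hexp.const_mul (z 0 j / z 0 i)) (nonneg hz h₀ · j) hbound

theorem tendsto_single [DecidableEq ι] (h₀ : ∀ i, 0 ≤ z 0 i) (hsum : ∑ i, z 0 i = 1)
    {i₀ : ι} (hi₀ : 0 < z 0 i₀) (hf : ∀ j ≠ i₀, f j < f i₀) :
    Tendsto z atTop (𝓝 (Pi.single i₀ 1)) := by
  have hoff : ∀ j ≠ i₀, Tendsto (fun t => z t j) atTop (𝓝 0) := fun j hj =>
    tendsto_zero_of_lt hz h₀ hsum hi₀ (hf j hj)
  have hon : Tendsto (fun t => z t i₀) atTop (𝓝 1) := by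
    have hrest : Tendsto (fun t => ∑ j ∈ univ.erase i₀, z t j) atTop (𝓝 0) := by
      simpa only [sum_const_zero] using
        tendsto_finsetSum _ fun j hj => hoff j (ne_of_mem_erase hj)
    have hlim := (tendsto_const_nhds (x := (1 : ℝ))).sub hrest
    rw [sub_zero] at hlim
    refine hlim.congr fun t => ?_
    rw [← sum_eq_one hz hsum t, ← sum_erase_add _ _ (mem_univ i₀), add_sub_cancel_left]
  rw [tendsto_pi_nhds]
  intro j
  rcases eq_or_ne j i₀ with rfl | hj
  · simpa using hon
  · simpa [hj] using hoff j hj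

end Dynamics

end Replicator

theorem combined_rate_eq_sub_meanFitness (Θ₁ Θ₂ : ℝ) {ι : Type*} [Fintype ι] (b ν w : ι → ℝ) (i : ι) :
    Θ₁ * (b i - ∑ j, b j * w j) + Θ₂ * (-ν i + ∑ j, ν j * w j) =
      (Θ₁ * b i - Θ₂ * ν i) - Replicator.meanFitness (fun j => Θ₁ * b j - Θ₂ * ν j) w := by
  simp only [Replicator.meanFitness, sub_mul, sum_sub_distrib, mul_assoc, ← mul_sum]
  ring

theorem competitive_exclusion_combined_general
    (N : ℕ) (hN : 1 ≤ N) (Θ₁ Θ₂ : ℝ)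
    (b ν : Fin N → ℝ)
    (hmax : ∀ j : Fin N, j ≠ ⟨0, hN⟩ →
      Θ₁ * b j - Θ₂ * ν j < Θ₁ * b ⟨0, hN⟩ - Θ₂ * ν ⟨0, hN⟩)
    (E₁ : Fin N → ℝ) (hE₁ : E₁ = fun i => if i = ⟨0, hN⟩ then 1 else 0)
    (z : ℝ → Fin N → ℝ)
    (hz : ∀ (t : ℝ) (i : Fin N), HasDerivAt (fun s => z s i)
      (z t i * (Θ₁ * (b i - ∑ j, b j * z t j)
        + Θ₂ * (-ν i + ∑ j, ν j * z t j))) t)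
    (hz0 : (∀ i, 0 ≤ z 0 i) ∧ ∑ i, z 0 i = 1 ∧ 0 < z 0 ⟨0, hN⟩) :
    -- Lyapunov property of V = -ln z₀
    (∀ w : Fin N → ℝ, 0 < w ⟨0, hN⟩ → (∀ i, 0 ≤ w i) → ∑ i, w i = 1 →
      -(Θ₁ * (b ⟨0, hN⟩ - ∑ j, b j * w j)
        + Θ₂ * (-ν ⟨0, hN⟩ + ∑ j, ν j * w j)) ≤ 0 ∧
      (-(Θ₁ * (b ⟨0, hN⟩ - ∑ j, b j * w j)
        + Θ₂ * (-ν ⟨0, hN⟩ + ∑ j, ν j * w j)) = 0 ↔ w = E₁)) ∧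
    -- convergence to E₁
    Tendsto z atTop (nhds E₁) := by
  obtain ⟨h₀, hsum, hpos⟩ := hz0
  have hE : E₁ = Pi.single ⟨0, hN⟩ 1 := by
    rw [hE₁]
    ext i
    simp [Pi.single_apply]
  simp only [combined_rate_eq_sub_meanFitness] at hz ⊢
  refine ⟨fun w _ hw₀ hw => ⟨?_, ?_⟩, hE ▸ Replicator.tendsto_single hz h₀ hsum hpos hmax⟩
  · exact neg_nonpos.2 <| sub_nonneg.2 <| Replicator.meanFitness_le
      (fun j => (eq_or_ne j _).elim (· ▸ le_rfl) fun hj => (hmax j hj).le) hw₀ hw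
  · rw [neg_eq_zero, sub_eq_zero, eq_comm, hE, Replicator.meanFitness_eq_iff hmax hw₀ hw]

/-- Combined variation in transmission and clearance rates:
for `zᵢ' = zᵢ (Θ₁(bᵢ - Σⱼ bⱼzⱼ) + Θ₂(-νᵢ + Σⱼ νⱼzⱼ))` on the simplex, if strain
`0` strictly maximizes `Θ₁bᵢ - Θ₂νᵢ`, then `V(z) = -ln z₀` is a Lyapunov
function and every solution with `z₀(0) > 0` converges to `E₁ = (1,0,…,0)`. -/
theorem competitive_exclusion_combined
    (N : ℕ) (hN : 1 ≤ N) (Θ₁ Θ₂ : ℝ) (hΘ₁ : 0 < Θ₁) (hΘ₂ : 0 < Θ₂)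
    (b ν : Fin N → ℝ)
    (hmax : ∀ j : Fin N, j ≠ ⟨0, hN⟩ →
      Θ₁ * b j - Θ₂ * ν j < Θ₁ * b ⟨0, hN⟩ - Θ₂ * ν ⟨0, hN⟩)
    (E₁ : Fin N → ℝ) (hE₁ : E₁ = fun i => if i = ⟨0, hN⟩ then 1 else 0)
    (z : ℝ → Fin N → ℝ)
    (hz : ∀ (t : ℝ) (i : Fin N), HasDerivAt (fun s => z s i)
      (z t i * (Θ₁ * (b i - ∑ j, b j * z t j)
        + Θ₂ * (-ν i + ∑ j, ν j * z t j))) t)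
    (hz0 : (∀ i, 0 ≤ z 0 i) ∧ ∑ i, z 0 i = 1 ∧ 0 < z 0 ⟨0, hN⟩) :
    -- Lyapunov property of V = -ln z₀
    (∀ w : Fin N → ℝ, 0 < w ⟨0, hN⟩ → (∀ i, 0 ≤ w i) → ∑ i, w i = 1 →
      -(Θ₁ * (b ⟨0, hN⟩ - ∑ j, b j * w j)
        + Θ₂ * (-ν ⟨0, hN⟩ + ∑ j, ν j * w j)) ≤ 0 ∧
      (-(Θ₁ * (b ⟨0, hN⟩ - ∑ j, b j * w j)
        + Θ₂ * (-ν ⟨0, hN⟩ + ∑ j, ν j * w j)) = 0 ↔ w = E₁)) ∧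
    -- convergence to E₁
    Tendsto z atTop (nhds E₁) :=
  competitive_exclusion_combined_general N hN Θ₁ Θ₂ b ν hmax E₁ hE₁ z hz hz0
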